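/- Let n ≥ 3 and let I be a nonempty proper nested subset of [n]. If among the four diagonals δ_1, δ_2, δ_3, δ_4 exactly δ_1 is proper (i.e. D_I = {δ_1}), then I ⊆ D and |I| = 1. -/

import Mathlib

/-! Write `a = a(I)`, `b = b(I)`, `γ = min I`, `Γ = max I`, so `a < γ ≤ Γ < b` with `a, b ∈ D̄`.
A boundary edge joining a point of `D̄` to a point of `U` must be `{0, min U}` or `{max U, n+1}`,
and one joining two points of `[n]` of different type does not exist. Hence if `Γ ∈ U`, then
`δ_2 = {a, Γ}` forces `a = 0`, so `γ = 1 ∈ D` and `δ_4` would be proper; if `γ ∈ U` and `Γ ∈ D`,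
then `δ_3 = {γ, b}` forces `b = n + 1`, so `Γ = n` and again `δ_4` would be proper. Thus
`γ, Γ ∈ D`, and `δ_2` is an edge between consecutive elements of `D̄`, which leaves no room for
`γ < Γ`. -/

open Finset

attribute [local instance] Classical.propDecidable

namespace AssocPaper

/-- `x` and `y` are consecutive elements of the finite set `S`. -/
def ConsecIn (S : Finset ℕ) (x y : ℕ) : Prop :=
  x ∈ S ∧ y ∈ S ∧ x < y ∧ ∀ z ∈ S, ¬ (x < z ∧ z < y)

/-- `D̄ = D ∪ {0, n+1}`. -/
def Dbar (n : ℕ) (D : Finset ℕ) : Finset ℕ := insert 0 (insert (n + 1) D)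

/-- The boundary edges of the `c`-labeled `(n+2)`-gon, given by endpoints `x < y`:
pairs of consecutive elements of `D̄`; if `U ≠ ∅` also `{0, min U}`, `{max U, n+1}` and
pairs of consecutive elements of `U`; if `U = ∅` also `{0, n+1}`. -/
def IsBoundary (n : ℕ) (D U : Finset ℕ) (x y : ℕ) : Prop :=
  ConsecIn (Dbar n D) x y
    ∨ (U.Nonempty ∧
        ((x = 0 ∧ y ∈ U ∧ ∀ u ∈ U, y ≤ u)
          ∨ (y = n + 1 ∧ x ∈ U ∧ ∀ u ∈ U, u ≤ x)
          ∨ ConsecIn U x y))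
    ∨ (U = ∅ ∧ x = 0 ∧ y = n + 1)

/-- `{x, y}` (with `x < y ≤ n+1`) is a proper diagonal: a diagonal of the
`(n+2)`-gon which is not a boundary edge. -/
def IsProper (n : ℕ) (D U : Finset ℕ) (x y : ℕ) : Prop :=
  x < y ∧ y ≤ n + 1 ∧ ¬ IsBoundary n D U x y

/-- The set `R_δ` for a proper diagonal `δ = {x,y}` with `x < y`. -/
noncomputable def Rdiag (n : ℕ) (D U : Finset ℕ) (x y : ℕ) : Finset ℕ :=
  if x ∈ U then
    (if y ∈ U then (D ∪ U.filter fun u => u ≤ x) ∪ U.filter fun u => y ≤ u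
     else D.filter (fun d => d < y) ∪ U.filter fun u => u ≤ x)
  else
    (if y ∈ U then D.filter (fun d => x < d) ∪ U.filter fun u => y ≤ u
     else D.filter fun d => x < d ∧ d < y)

/-- The extension of `R` to non-proper and degenerate diagonals `δ = {x,y}`, `x ≤ y`:
`R_δ = [n]` if `U = ∅` and `δ = {0,n+1}`; for other non-proper or degenerate `δ`,
`R_δ = ∅` if `x,y ∈ D̄` and `R_δ = [n]` otherwise. -/
noncomputable def Rext (n : ℕ) (D U : Finset ℕ) (x y : ℕ) : Finset ℕ :=
  if IsProper n D U x y then Rdiag n D U x y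
  else if U = ∅ ∧ x = 0 ∧ y = n + 1 then Finset.Icc 1 n
  else if x ∈ U ∨ y ∈ U then Finset.Icc 1 n
  else ∅

/-- The extension of the right-hand sides `z_{R_δ}` to non-proper and degenerate
diagonals, given the values `w` on proper diagonals and the value `zn = z_{[n]}`. -/
noncomputable def zext (n : ℕ) (D U : Finset ℕ) (w : ℕ × ℕ → ℝ) (zn : ℝ) (x y : ℕ) : ℝ :=
  if IsProper n D U x y then w (x, y)
  else if U = ∅ ∧ x = 0 ∧ y = n + 1 then zn
  else if x ∈ U ∨ y ∈ U then zn
  else 0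

/-- `a(I)`: the largest element of `D ∪ {0}` smaller than `min I`. -/
noncomputable def aI (D I : Finset ℕ) : ℕ :=
  ((insert 0 D).filter fun e => ∀ i ∈ I, e < i).sup id

/-- `b(I)`: the smallest element of `D ∪ {n+1}` larger than `max I`. -/
noncomputable def bI (n : ℕ) (D I : Finset ℕ) : ℕ :=
  sInf {e : ℕ | e ∈ insert (n + 1) D ∧ ∀ i ∈ I, i < e}

/-- The minimum element `γ` of `I` (junk value for `I = ∅`). -/
noncomputable def minEl (I : Finset ℕ) : ℕ := sInf {i : ℕ | i ∈ I}

/-- The maximum element `Γ` of `I` (junk value `0` for `I = ∅`). -/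
noncomputable def maxEl (I : Finset ℕ) : ℕ := I.sup id

/-- A nonempty `I ⊆ [n]` is nested if every `d ∈ D` with `a(I) < d < b(I)` lies in `I`. -/
def IsNested (n : ℕ) (D I : Finset ℕ) : Prop :=
  I.Nonempty ∧ I ⊆ Finset.Icc 1 n ∧
    ∀ d ∈ D, aI D I < d → d < bI n D I → d ∈ I

/-- The nested components of `I`: the inclusion-maximal nested subsets of `I`. -/
noncomputable def nestedComponents (n : ℕ) (D I : Finset ℕ) : Finset (Finset ℕ) :=
  I.powerset.filter fun J =>
    IsNested n D J ∧ ∀ K ∈ I.powerset, IsNested n D K → J ⊆ K → J = K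

/-- `v(I)`: the number of nested components of `I`. -/
noncomputable def vI (n : ℕ) (D I : Finset ℕ) : ℕ := (nestedComponents n D I).card

/-- `x` is the last element of one of the up intervals of `J`
(an element of `J ∩ U` whose successor in `U`, if any, is not in `J`). -/
def IsRunEnd (U J : Finset ℕ) (x : ℕ) : Prop :=
  x ∈ J ∧ x ∈ U ∧ ∀ y, ConsecIn U x y → y ∉ J

/-- `y` is the first element of one of the up intervals of `J`
(an element of `J ∩ U` whose predecessor in `U`, if any, is not in `J`). -/
def IsRunStart (U J : Finset ℕ) (y : ℕ) : Prop :=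
  y ∈ J ∧ y ∈ U ∧ ∀ x, ConsecIn U x y → x ∉ J

/-- `{x,y}` is one of the diagonals `δ_1(J), …, δ_{w+1}(J)` associated to a nested
set `J` with `a = a(J)`, `b = b(J)` and up intervals `[α_1,β_1]_U, …, [α_w,β_w]_U`,
namely `{a,α_1}, {β_1,α_2}, …, {β_w,b}` (and `{a,b}` when `w = 0`). -/
def AssocDiag (n : ℕ) (D U J : Finset ℕ) (x y : ℕ) : Prop :=
  x < y ∧ (x = aI D J ∨ IsRunEnd U J x) ∧ (y = bI n D J ∨ IsRunStart U J y) ∧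
    ∀ u ∈ J ∩ U, ¬ (x < u ∧ u < y)

/-- `W(J)`: the proper diagonals among the diagonals associated to the nested set `J`. -/
noncomputable def WJ (n : ℕ) (D U J : Finset ℕ) : Finset (ℕ × ℕ) :=
  (Finset.range (n + 2) ×ˢ Finset.range (n + 2)).filter fun p =>
    AssocDiag n D U J p.1 p.2 ∧ IsProper n D U p.1 p.2

/-- The tight value `z^c_I = ∑_i ( ∑_{j ∈ W(J_i)} w_{δ_j(J_i)} − (|W(J_i)|−1)·z_{[n]} )`,
the sum running over the nested components `J_i` of `I` (so `z^c_∅ = 0`). -/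
noncomputable def zc (n : ℕ) (D U : Finset ℕ) (w : ℕ × ℕ → ℝ) (zn : ℝ) (I : Finset ℕ) : ℝ :=
  ∑ J ∈ nestedComponents n D I,
    ((∑ p ∈ WJ n D U J, w p) - (((WJ n D U J).card : ℝ) - 1) * zn)

/-- The Minkowski coefficient `y_I = ∑_{J ⊆ I} (−1)^{|I∖J|} z^c_J`. -/
noncomputable def yI (n : ℕ) (D U : Finset ℕ) (w : ℕ × ℕ → ℝ) (zn : ℝ) (I : Finset ℕ) : ℝ :=
  ∑ J ∈ I.powerset, (-1 : ℝ) ^ (I \ J).card * zc n D U w zn J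

/-- The associahedron right-hand sides `w_δ = |R_δ|·(|R_δ|+1)/2`. -/
noncomputable def wAs (n : ℕ) (D U : Finset ℕ) (p : ℕ × ℕ) : ℝ :=
  (((Rdiag n D U p.1 p.2).card : ℝ) * (((Rdiag n D U p.1 p.2).card : ℝ) + 1)) / 2

/-- The associahedron value `z_{[n]} = n(n+1)/2`. -/
noncomputable def znAs (n : ℕ) : ℝ := ((n : ℝ) * ((n : ℝ) + 1)) / 2


variable {n : ℕ} {D U I : Finset ℕ} {x y : ℕ}

lemma isBoundary_of_not_isProper (h : ¬ IsProper n D U x y) (hxy : x < y) (hy : y ≤ n + 1) :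
    IsBoundary n D U x y :=
  not_not.mp fun hB => h ⟨hxy, hy, hB⟩

lemma notMem_Dbar_of_mem (hU : U ⊆ Icc 1 n) (hdisj : Disjoint D U) {u : ℕ} (hu : u ∈ U) :
    u ∉ Dbar n D := by
  have hu' := mem_Icc.mp (hU hu)
  simp only [Dbar, mem_insert, not_or]
  exact ⟨by omega, by omega, disjoint_right.mp hdisj hu⟩

namespace IsBoundary

lemma consecIn_Dbar (h : IsBoundary n D U x y) (hx : x ∉ U) (hy : y ∉ U) (hyn : y ≠ n + 1) :
    ConsecIn (Dbar n D) x y := by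
  rcases h with h | ⟨-, ⟨-, hyU, -⟩ | ⟨hy', -⟩ | ⟨hxU, -⟩⟩ | ⟨-, -, hy'⟩
  exacts [h, absurd hyU hy, absurd hy' hyn, absurd hxU hx, absurd hy' hyn]

lemma left_eq_zero (hU : U ⊆ Icc 1 n) (hdisj : Disjoint D U) (h : IsBoundary n D U x y)
    (hx : x ∉ U) (hy : y ∈ U) : x = 0 := by
  have hyn : y ≠ n + 1 := by have := (mem_Icc.mp (hU hy)).2; omega
  rcases h with h | ⟨-, ⟨hx0, -⟩ | ⟨hy', -⟩ | ⟨hxU, -⟩⟩ | ⟨hU0, -⟩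
  exacts [absurd h.2.1 (notMem_Dbar_of_mem hU hdisj hy), hx0, absurd hy' hyn, absurd hxU hx,
    absurd hy (hU0 ▸ notMem_empty y)]

lemma right_eq_succ (hU : U ⊆ Icc 1 n) (hdisj : Disjoint D U) (h : IsBoundary n D U x y)
    (hx : x ∈ U) (hy : y ∉ U) : y = n + 1 := by
  have hx0 : x ≠ 0 := by have := (mem_Icc.mp (hU hx)).1; omega
  rcases h with h | ⟨-, ⟨hx', -⟩ | ⟨hy', -⟩ | ⟨-, hyU, -⟩⟩ | ⟨hU0, -⟩
  exacts [absurd h.1 (notMem_Dbar_of_mem hU hdisj hx), absurd hx' hx0, hy', absurd hyU hy,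
    absurd hx (hU0 ▸ notMem_empty x)]

end IsBoundary

section Extremes

variable (hne : I.Nonempty)
include hne

lemma minEl_mem : minEl I ∈ I := Nat.sInf_mem (s := {i | i ∈ I}) hne

lemma maxEl_mem : maxEl I ∈ I := by
  obtain ⟨m, hm, hmax⟩ := exists_mem_eq_sup I hne id
  rwa [maxEl, hmax]

end Extremes

lemma minEl_le {i : ℕ} (hi : i ∈ I) : minEl I ≤ i := Nat.sInf_le (s := {i | i ∈ I}) hi

lemma le_maxEl {i : ℕ} (hi : i ∈ I) : i ≤ maxEl I := le_sup (f := id) hi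

lemma aI_mem_filter (hsub : I ⊆ Icc 1 n) :
    aI D I ∈ (insert 0 D).filter fun e => ∀ i ∈ I, e < i := by
  have hpos : ∀ i ∈ I, 0 < i := fun i hi => (mem_Icc.mp (hsub hi)).1
  have h0 : 0 ∈ (insert 0 D).filter fun e => ∀ i ∈ I, e < i :=
    mem_filter.mpr ⟨mem_insert_self 0 D, hpos⟩
  obtain ⟨e, he, hmax⟩ := exists_mem_eq_sup _ ⟨0, h0⟩ id
  rwa [aI, hmax]

lemma aI_mem_Dbar (hsub : I ⊆ Icc 1 n) : aI D I ∈ Dbar n D := by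
  have ha := (mem_filter.mp (aI_mem_filter (D := D) hsub)).1
  simp only [Dbar, mem_insert] at ha ⊢
  tauto

lemma aI_lt (hsub : I ⊆ Icc 1 n) {i : ℕ} (hi : i ∈ I) : aI D I < i :=
  (mem_filter.mp (aI_mem_filter hsub)).2 i hi

lemma le_aI {d : ℕ} (hd : d ∈ D) (hlt : ∀ i ∈ I, d < i) : d ≤ aI D I :=
  le_sup (f := id) (mem_filter.mpr ⟨mem_insert_of_mem hd, hlt⟩)

lemma bI_mem (hsub : I ⊆ Icc 1 n) :
    bI n D I ∈ insert (n + 1) D ∧ ∀ i ∈ I, i < bI n D I :=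
  have hlt : ∀ i ∈ I, i < n + 1 := fun _ hi => Nat.lt_succ_of_le (mem_Icc.mp (hsub hi)).2
  Nat.sInf_mem (s := {e | e ∈ insert (n + 1) D ∧ ∀ i ∈ I, i < e})
    ⟨n + 1, mem_insert_self _ _, hlt⟩

lemma bI_mem_Dbar (hsub : I ⊆ Icc 1 n) : bI n D I ∈ Dbar n D :=
  mem_insert_of_mem (bI_mem hsub).1

lemma lt_bI (hsub : I ⊆ Icc 1 n) {i : ℕ} (hi : i ∈ I) : i < bI n D I :=
  (bI_mem hsub).2 i hi

lemma bI_le_succ (hsub : I ⊆ Icc 1 n) : bI n D I ≤ n + 1 :=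
  Nat.sInf_le ⟨mem_insert_self _ _, fun _ hi => Nat.lt_succ_of_le (mem_Icc.mp (hsub hi)).2⟩

lemma bI_le {e : ℕ} (he : e ∈ D) (hlt : ∀ i ∈ I, i < e) : bI n D I ≤ e :=
  Nat.sInf_le ⟨mem_insert_of_mem he, hlt⟩

lemma minEl_eq_one_of_aI_eq_zero (hne : I.Nonempty) (hsub : I ⊆ Icc 1 n) (h1D : 1 ∈ D)
    (ha : aI D I = 0) : minEl I = 1 := by
  have hγ := (mem_Icc.mp (hsub (minEl_mem hne))).1
  by_contra hγ1
  have := le_aI (I := I) h1D fun _ hi => by have := minEl_le hi; omega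
  omega

lemma maxEl_eq_of_bI_eq_succ (hne : I.Nonempty) (hsub : I ⊆ Icc 1 n) (hnD : n ∈ D)
    (hb : bI n D I = n + 1) : maxEl I = n := by
  have hΓ := (mem_Icc.mp (hsub (maxEl_mem hne))).2
  by_contra hΓn
  have := bI_le (n := n) (I := I) hnD fun _ hi => by have := le_maxEl hi; omega
  omega

section Cases

variable (hDU : D ∪ U = Icc 1 n) (hdisj : Disjoint D U) (hne : I.Nonempty) (hsub : I ⊆ Icc 1 n)
include hDU hdisj hne hsub

lemma maxEl_mem_of_not_isProper (h1D : 1 ∈ D) (h2 : ¬ IsProper n D U (aI D I) (maxEl I))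
    (h4 : ¬ IsProper n D U (minEl I) (maxEl I)) : maxEl I ∈ D := by
  have hU : U ⊆ Icc 1 n := hDU ▸ subset_union_right
  have hΓ := mem_Icc.mp (hsub (maxEl_mem hne))
  refine (mem_union.mp (hDU ▸ hsub (maxEl_mem hne))).resolve_right fun hΓU => ?_
  have ha0 : aI D I = 0 :=
    (isBoundary_of_not_isProper h2 (aI_lt hsub (maxEl_mem hne)) (by omega)).left_eq_zero hU hdisj
      (fun haU => notMem_Dbar_of_mem hU hdisj haU (aI_mem_Dbar hsub)) hΓU
  have hγ1 := minEl_eq_one_of_aI_eq_zero hne hsub h1D ha0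
  have hγΓ : minEl I < maxEl I := lt_of_le_of_ne (minEl_le (maxEl_mem hne)) fun h =>
    disjoint_left.mp hdisj h1D (hγ1 ▸ h ▸ hΓU)
  have hγ0 := (isBoundary_of_not_isProper h4 hγΓ (by omega)).left_eq_zero hU hdisj
    (fun hγU => disjoint_left.mp hdisj h1D (hγ1 ▸ hγU)) hΓU
  omega

lemma minEl_mem_of_not_isProper (hnD : n ∈ D) (hΓD : maxEl I ∈ D)
    (h3 : ¬ IsProper n D U (minEl I) (bI n D I))
    (h4 : ¬ IsProper n D U (minEl I) (maxEl I)) : minEl I ∈ D := by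
  have hU : U ⊆ Icc 1 n := hDU ▸ subset_union_right
  have hΓ := mem_Icc.mp (hsub (maxEl_mem hne))
  have hΓU : maxEl I ∉ U := disjoint_left.mp hdisj hΓD
  refine (mem_union.mp (hDU ▸ hsub (minEl_mem hne))).resolve_right fun hγU => ?_
  have hb : bI n D I = n + 1 :=
    (isBoundary_of_not_isProper h3 (lt_bI hsub (minEl_mem hne)) (bI_le_succ hsub)).right_eq_succ
      hU hdisj hγU fun hbU => notMem_Dbar_of_mem hU hdisj hbU (bI_mem_Dbar hsub)
  have hΓn := maxEl_eq_of_bI_eq_succ hne hsub hnD hb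
  have hγΓ : minEl I < maxEl I :=
    lt_of_le_of_ne (minEl_le (maxEl_mem hne)) fun h => hΓU (h ▸ hγU)
  have hΓ' := (isBoundary_of_not_isProper h4 hγΓ (by omega)).right_eq_succ hU hdisj hγU hΓU
  omega

lemma minEl_eq_maxEl_of_not_isProper (hγD : minEl I ∈ D) (hΓD : maxEl I ∈ D)
    (h2 : ¬ IsProper n D U (aI D I) (maxEl I)) : minEl I = maxEl I := by
  have hU : U ⊆ Icc 1 n := hDU ▸ subset_union_right
  have hΓ := mem_Icc.mp (hsub (maxEl_mem hne))
  have hcons :=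
    (isBoundary_of_not_isProper h2 (aI_lt hsub (maxEl_mem hne)) (by omega)).consecIn_Dbar
      (fun haU => notMem_Dbar_of_mem hU hdisj haU (aI_mem_Dbar hsub)) (disjoint_left.mp hdisj hΓD)
      (by omega)
  have hγ : minEl I ∈ Dbar n D := mem_insert_of_mem (mem_insert_of_mem hγD)
  have := hcons.2.2.2 _ hγ
  have := aI_lt (D := D) hsub (minEl_mem hne)
  have := minEl_le (maxEl_mem hne)
  omega

end Cases

theorem statement14_general (n : ℕ) (D U : Finset ℕ)
    (hDU : D ∪ U = Finset.Icc 1 n) (hdisj : Disjoint D U) (h1D : 1 ∈ D) (hnD : n ∈ D)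
    (I : Finset ℕ) (hne : I.Nonempty) (hsub : I ⊆ Finset.Icc 1 n)
    (h2 : ¬ IsProper n D U (aI D I) (maxEl I))
    (h3 : ¬ IsProper n D U (minEl I) (bI n D I))
    (h4 : ¬ IsProper n D U (minEl I) (maxEl I)) :
    I ⊆ D ∧ I.card = 1 := by
  have hΓD := maxEl_mem_of_not_isProper hDU hdisj hne hsub h1D h2 h4
  have hγD := minEl_mem_of_not_isProper hDU hdisj hne hsub hnD hΓD h3 h4
  have hγΓ := minEl_eq_maxEl_of_not_isProper hDU hdisj hne hsub hγD hΓD h2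
  have hI : I = {maxEl I} := eq_singleton_iff_unique_mem.mpr
    ⟨maxEl_mem hne, fun i hi => le_antisymm (le_maxEl hi) (hγΓ ▸ minEl_le hi)⟩
  rw [hI]
  exact ⟨singleton_subset_iff.mpr hΓD, card_singleton _⟩

/-- for `n ≥ 3` and a nonempty proper nested `I ⊆ [n]`, if among
`δ_1, δ_2, δ_3, δ_4` exactly `δ_1` is proper, then `I ⊆ D` and `|I| = 1`. -/
theorem statement14 (n : ℕ) (D U : Finset ℕ) (hn : 3 ≤ n)
    (hDU : D ∪ U = Finset.Icc 1 n) (hdisj : Disjoint D U) (h1D : 1 ∈ D) (hnD : n ∈ D)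
    (I : Finset ℕ) (hne : I.Nonempty) (hsub : I ⊆ Finset.Icc 1 n)
    (hpropersub : I ≠ Finset.Icc 1 n) (hnested : IsNested n D I)
    (h1 : IsProper n D U (aI D I) (bI n D I))
    (h2 : ¬ IsProper n D U (aI D I) (maxEl I))
    (h3 : ¬ IsProper n D U (minEl I) (bI n D I))
    (h4 : ¬ IsProper n D U (minEl I) (maxEl I)) :
    I ⊆ D ∧ I.card = 1 :=
  statement14_general n D U hDU hdisj h1D hnD I hne hsub h2 h3 h4

end AssocPaper
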